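/- Let Ω ⊆ ℝⁿ be a bounded Lipschitz domain, A₁, A₂ ∈ C¹(closure(Ω);ℂⁿ), V₁, V₂ ∈ L^∞(Ω), with 0 not a Dirichlet eigenvalue of H_{A₁,V₁} or of H_{Ā₂,V̄₂}. Let u₁ ∈ H¹(Ω) solve H_{A₁,V₁}u₁ = 0 and u₂ ∈ H¹(Ω) solve H_{Ā₂,V̄₂}u₂ = 0. Then ((Λ_{A₁,V₁} − Λ_{A₂,V₂}) (u₁|_{∂Ω}) | u₂|_{∂Ω})_{∂Ω} = ∫_Ω [ i(A₁−A₂)·(u₁ ∇ū₂ − ū₂ ∇u₁) + (A₁² − A₂² + V₁ − V₂) u₁ ū₂ ] dx. -/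

import Mathlib

open MeasureTheory Metric

/-- `Ω` has Lipschitz boundary. -/
def HasLipschitzBoundary {n : ℕ} (Ω : Set (EuclideanSpace ℝ (Fin n))) : Prop :=
  ∀ x ∈ frontier Ω, ∃ (r L : ℝ) (e : EuclideanSpace ℝ (Fin n))
    (φ : EuclideanSpace ℝ (Fin n) → ℝ), 0 < r ∧ ‖e‖ = 1 ∧
    LipschitzWith (Real.toNNReal L) φ ∧
    ∀ y ∈ Metric.ball x r,
      (y ∈ Ω ↔ φ (y - ((inner ℝ y e : ℝ)) • e) < (inner ℝ y e : ℝ))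

/-- `i`-th partial derivative. -/
noncomputable def pd {n : ℕ} (f : EuclideanSpace ℝ (Fin n) → ℂ)
    (x : EuclideanSpace ℝ (Fin n)) (i : Fin n) : ℂ :=
  fderiv ℝ f x (EuclideanSpace.single i 1)

/-- The sesquilinear form of `H_{A,V}`:
`B(u,e) = ∫_Ω (∇+iA)u · conj((∇+iĀ)e) + V u ē dx`, which for a weak solution `u` equals
the DN pairing `(Λ_{A,V}(u|_{∂Ω}) | e|_{∂Ω})_{∂Ω}`. -/
noncomputable def sesq {n : ℕ} (Ω : Set (EuclideanSpace ℝ (Fin n)))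
    (A : EuclideanSpace ℝ (Fin n) → Fin n → ℂ) (V : EuclideanSpace ℝ (Fin n) → ℂ)
    (u e : EuclideanSpace ℝ (Fin n) → ℂ) : ℂ :=
  ∫ x in Ω,
    (∑ i, (pd u x i + Complex.I * A x i * u x) *
        (starRingEnd ℂ) (pd e x i + Complex.I * (starRingEnd ℂ) (A x i) * e x)) +
      V x * u x * (starRingEnd ℂ) (e x)

/-- `u` belongs to `H¹(Ω) ∩ C(closure Ω)` (a convenient class of admissible functions). -/
def Reg {n : ℕ} (Ω : Set (EuclideanSpace ℝ (Fin n)))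
    (u : EuclideanSpace ℝ (Fin n) → ℂ) : Prop :=
  ContinuousOn u (closure Ω) ∧ ContDiffOn ℝ 1 u Ω ∧
    IntegrableOn (fun x => ‖u x‖ ^ 2 + ‖fderiv ℝ u x‖ ^ 2) Ω

/-- `u` is a weak solution of `H_{A,V} u = 0` in `Ω`: the sesquilinear form vanishes
against all admissible test functions vanishing on `∂Ω`. -/
def WeakSol {n : ℕ} (Ω : Set (EuclideanSpace ℝ (Fin n)))
    (A : EuclideanSpace ℝ (Fin n) → Fin n → ℂ) (V : EuclideanSpace ℝ (Fin n) → ℂ)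
    (u : EuclideanSpace ℝ (Fin n) → ℂ) : Prop :=
  ∀ e, Reg Ω e → (∀ x ∈ frontier Ω, e x = 0) → sesq Ω A V u e = 0

/-- `0` is not a Dirichlet eigenvalue of `H_{A,V}` in `Ω`: the only weak solution with
zero boundary values is zero. -/
def ZeroNotDirichletEV {n : ℕ} (Ω : Set (EuclideanSpace ℝ (Fin n)))
    (A : EuclideanSpace ℝ (Fin n) → Fin n → ℂ) (V : EuclideanSpace ℝ (Fin n) → ℂ) : Prop :=
  ∀ w, Reg Ω w → (∀ x ∈ frontier Ω, w x = 0) → WeakSol Ω A V w → ∀ x ∈ Ω, w x = 0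

/-! Write `B_{A,V}` for `sesq Ω A V`. Since `u₂` solves the adjoint equation
`H_{Ā₂,V̄₂} u₂ = 0` and `w - u₁` is an admissible test function vanishing on `∂Ω`,
`B_{A₂,V₂}(w - u₁, u₂) = conj B_{Ā₂,V̄₂}(u₂, w - u₁) = 0`: the pairing only sees the boundary
values of its first argument, so `B_{A₂,V₂}(w, u₂) = B_{A₂,V₂}(u₁, u₂)`. The difference
`B_{A₁,V₁}(u₁, u₂) - B_{A₂,V₂}(u₁, u₂)` is then a single integral, and the claimed integrand is
obtained by expanding `(∂ᵢ + iAᵢ)u · conj((∂ᵢ + iĀᵢ)e)` pointwise: the `∂u · ∂ē` terms cancel.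
All integrands are integrable because `A`, `V` are bounded on `Ω` and `u, e ∈ H¹(Ω)`. -/

section

variable {n : ℕ} {Ω : Set (EuclideanSpace ℝ (Fin n))}
  {A : EuclideanSpace ℝ (Fin n) → Fin n → ℂ} {V : EuclideanSpace ℝ (Fin n) → ℂ}

noncomputable def sesqIntegrand (A : EuclideanSpace ℝ (Fin n) → Fin n → ℂ)
    (V : EuclideanSpace ℝ (Fin n) → ℂ) (u e : EuclideanSpace ℝ (Fin n) → ℂ)
    (x : EuclideanSpace ℝ (Fin n)) : ℂ :=
  (∑ i, (pd u x i + Complex.I * A x i * u x) *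
      (starRingEnd ℂ) (pd e x i + Complex.I * (starRingEnd ℂ) (A x i) * e x)) +
    V x * u x * (starRingEnd ℂ) (e x)

theorem sesq_eq_integral (u e : EuclideanSpace ℝ (Fin n) → ℂ) :
    sesq Ω A V u e = ∫ x in Ω, sesqIntegrand A V u e x := rfl

theorem conj_sesqIntegrand (u e : EuclideanSpace ℝ (Fin n) → ℂ)
    (x : EuclideanSpace ℝ (Fin n)) :
    (starRingEnd ℂ) (sesqIntegrand (fun y i => (starRingEnd ℂ) (A y i))
      (fun y => (starRingEnd ℂ) (V y)) u e x) = sesqIntegrand A V e u x := by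
  simp only [sesqIntegrand, map_add, map_sum, map_mul, map_neg, Complex.conj_conj,
    Complex.conj_I]
  congr 1
  · exact Finset.sum_congr rfl fun i _ => by ring
  · ring

theorem sesq_eq_conj_sesq (u e : EuclideanSpace ℝ (Fin n) → ℂ) :
    sesq Ω A V e u = (starRingEnd ℂ) (sesq Ω (fun x i => (starRingEnd ℂ) (A x i))
      (fun x => (starRingEnd ℂ) (V x)) u e) := by
  simp only [sesq_eq_integral, ← integral_conj, conj_sesqIntegrand]

theorem covariant_mul_conj_sub (p q a₁ a₂ u e : ℂ) :
    (p + Complex.I * a₁ * u) * (starRingEnd ℂ) (q + Complex.I * (starRingEnd ℂ) a₁ * e) -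
        (p + Complex.I * a₂ * u) * (starRingEnd ℂ) (q + Complex.I * (starRingEnd ℂ) a₂ * e) =
      Complex.I * ((a₁ - a₂) * (u * (starRingEnd ℂ) q - (starRingEnd ℂ) e * p)) +
        (a₁ ^ 2 - a₂ ^ 2) * u * (starRingEnd ℂ) e := by
  simp only [map_add, map_mul, Complex.conj_conj, Complex.conj_I]
  linear_combination (a₂ ^ 2 - a₁ ^ 2) * u * (starRingEnd ℂ) e * Complex.I_sq

theorem sesqIntegrand_sub_sesqIntegrand (A₁ A₂ : EuclideanSpace ℝ (Fin n) → Fin n → ℂ)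
    (V₁ V₂ : EuclideanSpace ℝ (Fin n) → ℂ) (u e : EuclideanSpace ℝ (Fin n) → ℂ)
    (x : EuclideanSpace ℝ (Fin n)) :
    sesqIntegrand A₁ V₁ u e x - sesqIntegrand A₂ V₂ u e x =
      Complex.I * (∑ i, (A₁ x i - A₂ x i) *
          (u x * (starRingEnd ℂ) (pd e x i) - (starRingEnd ℂ) (e x) * pd u x i)) +
        ((∑ i, (A₁ x i) ^ 2) - (∑ i, (A₂ x i) ^ 2) + V₁ x - V₂ x) * u x *
          (starRingEnd ℂ) (e x) := by
  rw [sesqIntegrand, sesqIntegrand, add_sub_add_comm, ← Finset.sum_sub_distrib]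
  simp only [covariant_mul_conj_sub]
  rw [Finset.sum_add_distrib, ← Finset.mul_sum, ← Finset.sum_mul, ← Finset.sum_mul,
    Finset.sum_sub_distrib]
  ring

theorem pd_sub {u v : EuclideanSpace ℝ (Fin n) → ℂ} {x : EuclideanSpace ℝ (Fin n)}
    (hu : DifferentiableAt ℝ u x) (hv : DifferentiableAt ℝ v x) (i : Fin n) :
    pd (fun y => u y - v y) x i = pd u x i - pd v x i := by
  simp [pd, fderiv_fun_sub hu hv]

theorem sesqIntegrand_sub_left {u v : EuclideanSpace ℝ (Fin n) → ℂ}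
    {x : EuclideanSpace ℝ (Fin n)} (hu : DifferentiableAt ℝ u x) (hv : DifferentiableAt ℝ v x)
    (e : EuclideanSpace ℝ (Fin n) → ℂ) :
    sesqIntegrand A V (fun y => u y - v y) e x =
      sesqIntegrand A V u e x - sesqIntegrand A V v e x := by
  simp only [sesqIntegrand, pd_sub hu hv]
  rw [add_sub_add_comm, ← Finset.sum_sub_distrib]
  congr 1
  · exact Finset.sum_congr rfl fun i _ => by ring
  · ring

theorem Reg.differentiableAt {u : EuclideanSpace ℝ (Fin n) → ℂ} (hu : Reg Ω u) (hΩ : IsOpen Ω)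
    {x : EuclideanSpace ℝ (Fin n)} (hx : x ∈ Ω) : DifferentiableAt ℝ u x :=
  (hu.2.1.differentiableOn one_ne_zero).differentiableAt (hΩ.mem_nhds hx)

theorem Reg.aestronglyMeasurable {u : EuclideanSpace ℝ (Fin n) → ℂ} (hu : Reg Ω u)
    (hΩ : MeasurableSet Ω) : AEStronglyMeasurable u (volume.restrict Ω) :=
  (hu.1.mono subset_closure).aestronglyMeasurable hΩ

theorem Reg.sub (hΩ : IsOpen Ω) {u v : EuclideanSpace ℝ (Fin n) → ℂ} (hu : Reg Ω u)
    (hv : Reg Ω v) : Reg Ω (fun x => u x - v x) := by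
  refine ⟨hu.1.sub hv.1, hu.2.1.sub hv.2.1, ?_⟩
  have hm : AEStronglyMeasurable
      (fun x => ‖u x - v x‖ ^ 2 + ‖fderiv ℝ (fun y => u y - v y) x‖ ^ 2)
      (volume.restrict Ω) :=
    (((hu.aestronglyMeasurable hΩ.measurableSet).sub
      (hv.aestronglyMeasurable hΩ.measurableSet)).norm.pow 2).add
      ((measurable_fderiv ℝ _).norm.pow_const 2).aestronglyMeasurable
  refine Integrable.mono' ((hu.2.2.add hv.2.2).const_mul 2) hm
    ((ae_restrict_iff' hΩ.measurableSet).2 (Filter.Eventually.of_forall fun x hx => ?_))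
  rw [fderiv_fun_sub (hu.differentiableAt hΩ hx) (hv.differentiableAt hΩ hx),
    Real.norm_of_nonneg (by positivity)]
  dsimp only [Pi.add_apply]
  nlinarith [pow_le_pow_left₀ (norm_nonneg _) (norm_sub_le (u x) (v x)) 2,
    pow_le_pow_left₀ (norm_nonneg _) (norm_sub_le (fderiv ℝ u x) (fderiv ℝ v x)) 2,
    sq_nonneg (‖u x‖ - ‖v x‖), sq_nonneg (‖fderiv ℝ u x‖ - ‖fderiv ℝ v x‖)]

theorem norm_pd_le (u : EuclideanSpace ℝ (Fin n) → ℂ) (x : EuclideanSpace ℝ (Fin n))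
    (i : Fin n) : ‖pd u x i‖ ≤ ‖fderiv ℝ u x‖ := by
  simpa [pd] using (fderiv ℝ u x).le_opNorm (EuclideanSpace.single i 1)

theorem norm_pd_add_mul_le (u : EuclideanSpace ℝ (Fin n) → ℂ) (x : EuclideanSpace ℝ (Fin n))
    (i : Fin n) {a : ℂ} {M : ℝ} (ha : ‖a‖ ≤ M) :
    ‖pd u x i + Complex.I * a * u x‖ ≤ (1 + M) * (‖u x‖ + ‖fderiv ℝ u x‖) := by
  have hM : 0 ≤ M := (norm_nonneg a).trans ha
  calc ‖pd u x i + Complex.I * a * u x‖ ≤ ‖fderiv ℝ u x‖ + M * ‖u x‖ := by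
        refine (norm_add_le _ _).trans (add_le_add (norm_pd_le u x i) ?_)
        rw [norm_mul, norm_mul, Complex.norm_I, one_mul]
        exact mul_le_mul_of_nonneg_right ha (norm_nonneg _)
    _ ≤ (1 + M) * (‖u x‖ + ‖fderiv ℝ u x‖) := by
        nlinarith [norm_nonneg (u x), norm_nonneg (fderiv ℝ u x)]

theorem norm_sesqIntegrand_le (u e : EuclideanSpace ℝ (Fin n) → ℂ)
    {x : EuclideanSpace ℝ (Fin n)} {MA MV : ℝ} (hA : ‖A x‖ ≤ MA) (hV : ‖V x‖ ≤ MV) :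
    ‖sesqIntegrand A V u e x‖ ≤ (n * (1 + MA) ^ 2 + MV) *
      ((‖u x‖ + ‖fderiv ℝ u x‖) * (‖e x‖ + ‖fderiv ℝ e x‖)) := by
  set P := ‖u x‖ + ‖fderiv ℝ u x‖
  set Q := ‖e x‖ + ‖fderiv ℝ e x‖
  have hMA : 0 ≤ 1 + MA := by linarith [(norm_nonneg _).trans hA]
  have hAi (i : Fin n) : ‖A x i‖ ≤ MA := (norm_le_pi_norm (A x) i).trans hA
  have hterm (i : Fin n) : ‖(pd u x i + Complex.I * A x i * u x) *
      (starRingEnd ℂ) (pd e x i + Complex.I * (starRingEnd ℂ) (A x i) * e x)‖ ≤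
        (1 + MA) ^ 2 * (P * Q) := by
    rw [norm_mul, RCLike.norm_conj]
    calc _ ≤ ((1 + MA) * P) * ((1 + MA) * Q) :=
          mul_le_mul (norm_pd_add_mul_le u x i (hAi i))
            (norm_pd_add_mul_le e x i ((RCLike.norm_conj _).trans_le (hAi i)))
            (norm_nonneg _) (mul_nonneg hMA (by positivity))
      _ = (1 + MA) ^ 2 * (P * Q) := by ring
  have hpot : ‖V x * u x * (starRingEnd ℂ) (e x)‖ ≤ MV * (P * Q) := by
    rw [norm_mul, norm_mul, RCLike.norm_conj, mul_assoc]
    refine mul_le_mul hV ?_ (by positivity) ((norm_nonneg _).trans hV)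
    exact mul_le_mul (by simp [P]) (by simp [Q]) (norm_nonneg _) (by positivity)
  calc ‖sesqIntegrand A V u e x‖
      ≤ ∑ i : Fin n, (1 + MA) ^ 2 * (P * Q) + MV * (P * Q) :=
        (norm_add_le _ _).trans (add_le_add ((norm_sum_le _ _).trans
          (Finset.sum_le_sum fun i _ => hterm i)) hpot)
    _ = (n * (1 + MA) ^ 2 + MV) * (P * Q) := by simp; ring

theorem aestronglyMeasurable_sesqIntegrand (hΩ : MeasurableSet Ω)
    (hA : AEStronglyMeasurable A (volume.restrict Ω))
    (hV : AEStronglyMeasurable V (volume.restrict Ω)) {u e : EuclideanSpace ℝ (Fin n) → ℂ}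
    (hu : Reg Ω u) (he : Reg Ω e) :
    AEStronglyMeasurable (sesqIntegrand A V u e) (volume.restrict Ω) := by
  have hAi (i : Fin n) : AEStronglyMeasurable (fun x => A x i) (volume.restrict Ω) :=
    (continuous_apply i).comp_aestronglyMeasurable hA
  have hpd (f : EuclideanSpace ℝ (Fin n) → ℂ) (i : Fin n) :
      AEStronglyMeasurable (fun x => pd f x i) (volume.restrict Ω) :=
    (measurable_fderiv_apply_const ℝ f _).aestronglyMeasurable
  have hum := hu.aestronglyMeasurable hΩ
  have hem := he.aestronglyMeasurable hΩ
  unfold sesqIntegrand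
  fun_prop

theorem integrableOn_sesqIntegrand (hΩ : MeasurableSet Ω)
    (hAm : AEStronglyMeasurable A (volume.restrict Ω)) (hAb : ∃ M, ∀ x ∈ Ω, ‖A x‖ ≤ M)
    (hVm : AEStronglyMeasurable V (volume.restrict Ω)) (hVb : ∃ M, ∀ x ∈ Ω, ‖V x‖ ≤ M)
    {u e : EuclideanSpace ℝ (Fin n) → ℂ} (hu : Reg Ω u) (he : Reg Ω e) :
    IntegrableOn (sesqIntegrand A V u e) Ω := by
  obtain ⟨MA, hMA⟩ := hAb
  obtain ⟨MV, hMV⟩ := hVb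
  set C := n * (1 + MA) ^ 2 + MV
  refine Integrable.mono' ((hu.2.2.add he.2.2).const_mul C)
    (aestronglyMeasurable_sesqIntegrand hΩ hAm hVm hu he) ?_
  refine (ae_restrict_iff' hΩ).2 (Filter.Eventually.of_forall fun x hx => ?_)
  have hC : 0 ≤ C := by
    have := (norm_nonneg _).trans (hMA x hx)
    have := (norm_nonneg _).trans (hMV x hx)
    positivity
  refine (norm_sesqIntegrand_le u e (hMA x hx) (hMV x hx)).trans
    (mul_le_mul_of_nonneg_left ?_ hC)
  dsimp only [Pi.add_apply]
  nlinarith [sq_nonneg (‖u x‖ + ‖fderiv ℝ u x‖ - ‖e x‖ - ‖fderiv ℝ e x‖),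
    sq_nonneg (‖u x‖ - ‖fderiv ℝ u x‖), sq_nonneg (‖e x‖ - ‖fderiv ℝ e x‖)]

theorem sesq_eq_of_eqOn_frontier (hΩ : IsOpen Ω)
    (hAm : AEStronglyMeasurable A (volume.restrict Ω)) (hAb : ∃ M, ∀ x ∈ Ω, ‖A x‖ ≤ M)
    (hVm : AEStronglyMeasurable V (volume.restrict Ω)) (hVb : ∃ M, ∀ x ∈ Ω, ‖V x‖ ≤ M)
    {u v e : EuclideanSpace ℝ (Fin n) → ℂ} (hu : Reg Ω u) (hv : Reg Ω v) (he : Reg Ω e)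
    (huv : ∀ x ∈ frontier Ω, u x = v x)
    (he_sol : WeakSol Ω (fun x i => (starRingEnd ℂ) (A x i)) (fun x => (starRingEnd ℂ) (V x)) e) :
    sesq Ω A V u e = sesq Ω A V v e := by
  have hzero : sesq Ω A V (fun x => u x - v x) e = 0 := by
    rw [sesq_eq_conj_sesq, he_sol _ (hu.sub hΩ hv) fun x hx => sub_eq_zero.2 (huv x hx),
      map_zero]
  rw [← sub_eq_zero, ← hzero, sesq_eq_integral, sesq_eq_integral, sesq_eq_integral,
    ← integral_sub (integrableOn_sesqIntegrand hΩ.measurableSet hAm hAb hVm hVb hu he)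
      (integrableOn_sesqIntegrand hΩ.measurableSet hAm hAb hVm hVb hv he)]
  exact setIntegral_congr_fun hΩ.measurableSet fun x hx =>
    (sesqIntegrand_sub_left (hu.differentiableAt hΩ hx) (hv.differentiableAt hΩ hx) e).symm

theorem sesq_sub_sesq (hΩ : MeasurableSet Ω) {A₁ A₂ : EuclideanSpace ℝ (Fin n) → Fin n → ℂ}
    {V₁ V₂ : EuclideanSpace ℝ (Fin n) → ℂ}
    (hA₁m : AEStronglyMeasurable A₁ (volume.restrict Ω)) (hA₁b : ∃ M, ∀ x ∈ Ω, ‖A₁ x‖ ≤ M)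
    (hV₁m : AEStronglyMeasurable V₁ (volume.restrict Ω)) (hV₁b : ∃ M, ∀ x ∈ Ω, ‖V₁ x‖ ≤ M)
    (hA₂m : AEStronglyMeasurable A₂ (volume.restrict Ω)) (hA₂b : ∃ M, ∀ x ∈ Ω, ‖A₂ x‖ ≤ M)
    (hV₂m : AEStronglyMeasurable V₂ (volume.restrict Ω)) (hV₂b : ∃ M, ∀ x ∈ Ω, ‖V₂ x‖ ≤ M)
    {u e : EuclideanSpace ℝ (Fin n) → ℂ} (hu : Reg Ω u) (he : Reg Ω e) :
    sesq Ω A₁ V₁ u e - sesq Ω A₂ V₂ u e =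
      ∫ x in Ω,
        Complex.I * (∑ i, (A₁ x i - A₂ x i) *
            (u x * (starRingEnd ℂ) (pd e x i) - (starRingEnd ℂ) (e x) * pd u x i)) +
          ((∑ i, (A₁ x i) ^ 2) - (∑ i, (A₂ x i) ^ 2) + V₁ x - V₂ x) * u x *
            (starRingEnd ℂ) (e x) := by
  rw [sesq_eq_integral, sesq_eq_integral,
    ← integral_sub (integrableOn_sesqIntegrand hΩ hA₁m hA₁b hV₁m hV₁b hu he)
      (integrableOn_sesqIntegrand hΩ hA₂m hA₂b hV₂m hV₂b hu he)]
  simp only [sesqIntegrand_sub_sesqIntegrand]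

end

theorem dn_integral_identity_general (n : ℕ) (Ω : Set (EuclideanSpace ℝ (Fin n)))
    (hΩo : IsOpen Ω) (hΩb : Bornology.IsBounded Ω)
    (A₁ A₂ : EuclideanSpace ℝ (Fin n) → Fin n → ℂ)
    (hA₁ : ContDiffOn ℝ 1 A₁ (closure Ω)) (hA₂ : ContDiffOn ℝ 1 A₂ (closure Ω))
    (V₁ V₂ : EuclideanSpace ℝ (Fin n) → ℂ) (hV₁m : Measurable V₁) (hV₂m : Measurable V₂)
    (hV₁ : ∃ M, ∀ x ∈ Ω, ‖V₁ x‖ ≤ M) (hV₂ : ∃ M, ∀ x ∈ Ω, ‖V₂ x‖ ≤ M)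
    (u₁ u₂ w : EuclideanSpace ℝ (Fin n) → ℂ)
    (hu₁r : Reg Ω u₁) (hu₂r : Reg Ω u₂) (hwr : Reg Ω w)
    (hu₂ : WeakSol Ω (fun x i => (starRingEnd ℂ) (A₂ x i))
      (fun x => (starRingEnd ℂ) (V₂ x)) u₂)
    (hwb : ∀ x ∈ frontier Ω, w x = u₁ x) :
    sesq Ω A₁ V₁ u₁ u₂ - sesq Ω A₂ V₂ w u₂ =
      ∫ x in Ω,
        Complex.I * (∑ i, (A₁ x i - A₂ x i) *
            (u₁ x * (starRingEnd ℂ) (pd u₂ x i) - (starRingEnd ℂ) (u₂ x) * pd u₁ x i)) +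
          ((∑ i, (A₁ x i) ^ 2) - (∑ i, (A₂ x i) ^ 2) + V₁ x - V₂ x) * u₁ x *
            (starRingEnd ℂ) (u₂ x) := by
  have hmeas {B : EuclideanSpace ℝ (Fin n) → Fin n → ℂ} (hB : ContDiffOn ℝ 1 B (closure Ω)) :
      AEStronglyMeasurable B (volume.restrict Ω) :=
    (hB.continuousOn.mono subset_closure).aestronglyMeasurable hΩo.measurableSet
  have hbound {B : EuclideanSpace ℝ (Fin n) → Fin n → ℂ} (hB : ContDiffOn ℝ 1 B (closure Ω)) :
      ∃ M, ∀ x ∈ Ω, ‖B x‖ ≤ M :=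
    (hΩb.isCompact_closure.exists_bound_of_continuousOn hB.continuousOn).imp
      fun _ hM x hx => hM x (subset_closure hx)
  rw [sesq_eq_of_eqOn_frontier hΩo (hmeas hA₂) (hbound hA₂) hV₂m.aestronglyMeasurable hV₂
    hwr hu₁r hu₂r hwb hu₂]
  exact sesq_sub_sesq hΩo.measurableSet (hmeas hA₁) (hbound hA₁) hV₁m.aestronglyMeasurable hV₁
    (hmeas hA₂) (hbound hA₂) hV₂m.aestronglyMeasurable hV₂ hu₁r hu₂r

/-- The fundamental integral identity: if `u₁` solves `H_{A₁,V₁}u₁ = 0`, `u₂` solves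
`H_{Ā₂,V̄₂}u₂ = 0`, and `w` solves `H_{A₂,V₂}w = 0` with `w = u₁` on `∂Ω` (so that
`B_{A₂,V₂}(w,u₂)` is the pairing `(Λ_{A₂,V₂}(u₁|_{∂Ω}) | u₂|_{∂Ω})`), then
`((Λ_{A₁,V₁} − Λ_{A₂,V₂})(u₁|_{∂Ω}) | u₂|_{∂Ω})
  = ∫_Ω i(A₁−A₂)·(u₁∇ū₂ − ū₂∇u₁) + (A₁² − A₂² + V₁ − V₂) u₁ ū₂ dx`. -/
theorem dn_integral_identity (n : ℕ) (Ω : Set (EuclideanSpace ℝ (Fin n)))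
    (hΩo : IsOpen Ω) (hΩb : Bornology.IsBounded Ω) (hΩl : HasLipschitzBoundary Ω)
    (A₁ A₂ : EuclideanSpace ℝ (Fin n) → Fin n → ℂ)
    (hA₁ : ContDiffOn ℝ 1 A₁ (closure Ω)) (hA₂ : ContDiffOn ℝ 1 A₂ (closure Ω))
    (V₁ V₂ : EuclideanSpace ℝ (Fin n) → ℂ) (hV₁m : Measurable V₁) (hV₂m : Measurable V₂)
    (hV₁ : ∃ M, ∀ x ∈ Ω, ‖V₁ x‖ ≤ M) (hV₂ : ∃ M, ∀ x ∈ Ω, ‖V₂ x‖ ≤ M)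
    (hev₁ : ZeroNotDirichletEV Ω A₁ V₁)
    (hev₂ : ZeroNotDirichletEV Ω (fun x i => (starRingEnd ℂ) (A₂ x i))
      (fun x => (starRingEnd ℂ) (V₂ x)))
    (u₁ u₂ w : EuclideanSpace ℝ (Fin n) → ℂ)
    (hu₁r : Reg Ω u₁) (hu₂r : Reg Ω u₂) (hwr : Reg Ω w)
    (hu₁ : WeakSol Ω A₁ V₁ u₁)
    (hu₂ : WeakSol Ω (fun x i => (starRingEnd ℂ) (A₂ x i))
      (fun x => (starRingEnd ℂ) (V₂ x)) u₂)
    (hw : WeakSol Ω A₂ V₂ w) (hwb : ∀ x ∈ frontier Ω, w x = u₁ x) :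
    sesq Ω A₁ V₁ u₁ u₂ - sesq Ω A₂ V₂ w u₂ =
      ∫ x in Ω,
        Complex.I * (∑ i, (A₁ x i - A₂ x i) *
            (u₁ x * (starRingEnd ℂ) (pd u₂ x i) - (starRingEnd ℂ) (u₂ x) * pd u₁ x i)) +
          ((∑ i, (A₁ x i) ^ 2) - (∑ i, (A₂ x i) ^ 2) + V₁ x - V₂ x) * u₁ x *
            (starRingEnd ℂ) (u₂ x) :=
  dn_integral_identity_general n Ω hΩo hΩb A₁ A₂ hA₁ hA₂ V₁ V₂ hV₁m hV₂m hV₁ hV₂ u₁ u₂ w hu₁r hu₂r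
    hwr hu₂ hwb
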